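/- Let f be a real polynomial of degree n with only real roots, x_{n-1} the root of f^{(n-1)}, x_{n-2} a root of f^{(n-2)}, and let ξ be any root of f^{(m)} for 0 ≤ m ≤ n−2. Then |ξ − x_{n-1}| ≤ (n − m − 1)|x_{n-1} − x_{n-2}|. -/

import Mathlib

/-!
Let `g = f⁽ᵐ⁾`; it has degree `K = n - m` and, by Rolle, `K` real roots `b₁, …, b_K`. The
derivatives `g⁽ᴷ⁻¹⁾` and `g⁽ᴷ⁻²⁾` are linear and quadratic with coefficients read off from the top
three coefficients of `g`, so by Vieta `x_{n-1}` is the mean of the `bᵢ` and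
`∑ (bᵢ - x_{n-1})² = K (K - 1) (x_{n-1} - x_{n-2})²`. The deviations `bᵢ - x_{n-1}` sum to zero,
so Cauchy–Schwarz applied to the `K - 1` deviations other than `ξ - x_{n-1}` gives
`K (ξ - x_{n-1})² ≤ (K - 1) ∑ (bᵢ - x_{n-1})² = K (K - 1)² (x_{n-1} - x_{n-2})²`.
-/

open Polynomial
open scoped Nat

namespace Multiset

variable {R : Type*}

lemma esymm_one [CommSemiring R] (s : Multiset R) : s.esymm 1 = s.sum := by
  simp [esymm, powersetCard_one]

lemma esymm_two_cons [CommSemiring R] (a : R) (s : Multiset R) :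
    (a ::ₘ s).esymm 2 = a * s.sum + s.esymm 2 := by
  simp only [esymm, powersetCard_cons, powersetCard_one, map_add, map_map, sum_add,
    Function.comp_def, prod_cons, prod_singleton, add_comm]
  rw [sum_map_mul_left, map_id']

lemma sq_sum_eq_sum_sq_add_two_mul_esymm_two [CommSemiring R] (s : Multiset R) :
    s.sum ^ 2 = (s.map (· ^ 2)).sum + 2 * s.esymm 2 := by
  induction s using Multiset.induction with
  | empty => simp [esymm, powersetCard_zero_right]
  | cons a s ih =>
    rw [sum_cons, esymm_two_cons, map_cons, sum_cons, add_sq, ih]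
    ring

lemma sum_map_sub_sq [CommRing R] (s : Multiset R) (c : R) :
    (s.map fun b => (b - c) ^ 2).sum = (s.map (· ^ 2)).sum - 2 * c * s.sum + card s * c ^ 2 := by
  induction s using Multiset.induction with
  | empty => simp
  | cons a s ih =>
    simp only [map_cons, sum_cons, card_cons, ih]
    push_cast
    ring

lemma sq_sum_le_card_mul_sum_sq [Semiring R] [LinearOrder R] [IsStrictOrderedRing R]
    [ExistsAddOfLE R] (s : Multiset R) : s.sum ^ 2 ≤ card s * (s.map (· ^ 2)).sum := by
  have := _root_.sq_sum_le_card_mul_sum_sq (s := s.toEnumFinset) (f := Prod.fst)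
  rwa [Finset.sum_eq_multiset_sum, Finset.sum_eq_multiset_sum, ← Function.comp_def (· ^ 2),
    ← map_map, map_toEnumFinset_fst, card_toEnumFinset] at this

lemma card_mul_sq_le_of_sum_eq_zero [CommRing R] [LinearOrder R] [IsStrictOrderedRing R]
    {s : Multiset R} (hs : s.sum = 0) {a : R} (ha : a ∈ s) :
    card s * a ^ 2 ≤ (card s - 1) * (s.map (· ^ 2)).sum := by
  obtain ⟨t, rfl⟩ := exists_cons_of_mem ha
  have hsum : t.sum = -a := by rw [sum_cons] at hs; linear_combination hs
  have := sq_sum_le_card_mul_sum_sq t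
  rw [hsum, neg_sq] at this
  simp only [card_cons, Nat.cast_add, Nat.cast_one, map_cons, sum_cons]
  linear_combination this

end Multiset

namespace Polynomial

lemma natDegree_iterate_derivative_eq {R : Type*} [Semiring R] [IsAddTorsionFree R] (p : R[X])
    (k : ℕ) : (derivative^[k] p).natDegree = p.natDegree - k := by
  induction k with
  | zero => rfl
  | succ k ih => rw [Function.iterate_succ_apply', natDegree_derivative, ih, Nat.sub_sub]

lemma Splits.derivative_of_real {p : ℝ[X]} (hp : p.Splits) : p.derivative.Splits := by
  rw [splits_iff_card_roots] at hp ⊢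
  have := card_roots_le_derivative p
  have := card_roots' p.derivative
  rw [natDegree_derivative] at *
  omega

lemma Splits.iterate_derivative_of_real {p : ℝ[X]} (hp : p.Splits) (k : ℕ) :
    (derivative^[k] p).Splits := by
  induction k with
  | zero => exact hp
  | succ k ih => rw [Function.iterate_succ_apply']; exact ih.derivative_of_real

section CommSemiring

variable {R : Type*} [CommSemiring R] {p : R[X]} {k : ℕ}

lemma eval_iterate_derivative_of_natDegree_le_add_one
    (hp : p.natDegree ≤ k + 1) (x : R) :
    (derivative^[k] p).eval x = k ! * (p.coeff k + (k + 1) * p.coeff (k + 1) * x) := by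
  have hlt : (derivative^[k] p).natDegree < 2 :=
    (natDegree_iterate_derivative p k).trans_lt (by omega)
  rw [eval_eq_sum_range' hlt]
  simp only [Finset.sum_range_succ, Finset.sum_range_zero, coeff_iterate_derivative,
    Nat.descFactorial_eq_factorial_mul_choose, nsmul_eq_mul, Nat.zero_add]
  rw [add_comm 1 k, Nat.choose_self, Nat.choose_succ_self_right]
  push_cast
  ring

lemma eval_iterate_derivative_of_natDegree_le_add_two
    (hp : p.natDegree ≤ k + 2) (x : R) :
    (derivative^[k] p).eval x = k ! *
      (p.coeff k + (k + 1) * p.coeff (k + 1) * x + (k + 2).choose 2 * p.coeff (k + 2) * x ^ 2) := by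
  have hlt : (derivative^[k] p).natDegree < 3 :=
    (natDegree_iterate_derivative p k).trans_lt (by omega)
  rw [eval_eq_sum_range' hlt]
  simp only [Finset.sum_range_succ, Finset.sum_range_zero, coeff_iterate_derivative,
    Nat.descFactorial_eq_factorial_mul_choose, nsmul_eq_mul, Nat.zero_add]
  rw [add_comm 1 k, add_comm 2 k, Nat.choose_self, Nat.choose_succ_self_right,
    Nat.choose_symm_add]
  push_cast
  ring

end CommSemiring

section Vieta

variable {R : Type*} [CommRing R] [IsDomain R] {p : R[X]} {k : ℕ}

lemma coeff_eq_neg_leadingCoeff_mul_sum_roots (hroots : p.roots.card = p.natDegree)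
    (hk : p.natDegree = k + 1) : p.coeff k = -(p.leadingCoeff * p.roots.sum) := by
  rw [coeff_eq_esymm_roots_of_card hroots (by omega), hk, Nat.add_sub_cancel_left,
    Multiset.esymm_one]
  ring

lemma coeff_eq_leadingCoeff_mul_esymm_two_roots (hroots : p.roots.card = p.natDegree)
    (hk : p.natDegree = k + 2) : p.coeff k = p.leadingCoeff * p.roots.esymm 2 := by
  rw [coeff_eq_esymm_roots_of_card hroots (by omega), hk, Nat.add_sub_cancel_left]
  ring

end Vieta

section CharZero

variable {F : Type*} [Field F] [CharZero F] {p : F[X]} {k : ℕ}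

lemma Splits.sum_roots_eq_of_eval_iterate_derivative_eq_zero {y : F} (hp : p.Splits)
    (hk : p.natDegree = k + 1) (hy : (derivative^[k] p).eval y = 0) :
    p.roots.sum = (k + 1) * y := by
  have hroots := splits_iff_card_roots.1 hp
  have hlc : p.leadingCoeff ≠ 0 := leadingCoeff_ne_zero.2 (by rintro rfl; simp at hk)
  rw [eval_iterate_derivative_of_natDegree_le_add_one hk.le,
    coeff_eq_neg_leadingCoeff_mul_sum_roots hroots hk, ← hk, coeff_natDegree] at hy
  apply mul_left_cancel₀ (mul_ne_zero (Nat.cast_ne_zero.2 (Nat.factorial_ne_zero k)) hlc)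
  linear_combination -hy

lemma Splits.sum_sq_roots_sub_eq {x y : F} (hp : p.Splits) (hk : p.natDegree = k + 2)
    (hy : (derivative^[k + 1] p).eval y = 0) (hx : (derivative^[k] p).eval x = 0) :
    (p.roots.map fun b => (b - y) ^ 2).sum = (k + 2) * (k + 1) * (y - x) ^ 2 := by
  have hroots := splits_iff_card_roots.1 hp
  have hlc : p.leadingCoeff ≠ 0 := leadingCoeff_ne_zero.2 (by rintro rfl; simp at hk)
  have hsum := hp.sum_roots_eq_of_eval_iterate_derivative_eq_zero hk hy
  rw [eval_iterate_derivative_of_natDegree_le_add_two hk.le,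
    coeff_eq_leadingCoeff_mul_esymm_two_roots hroots hk,
    coeff_eq_neg_leadingCoeff_mul_sum_roots hroots hk, ← hk, coeff_natDegree, hk,
    Nat.cast_choose_two] at hx
  have hsq := Multiset.sq_sum_eq_sum_sq_add_two_mul_esymm_two p.roots
  rw [Multiset.sum_map_sub_sq, hroots, hk]
  apply mul_left_cancel₀ (mul_ne_zero (Nat.cast_ne_zero.2 (Nat.factorial_ne_zero k)) hlc)
  push_cast at hsum hx ⊢
  -- `∑ (b - y)² = e₁² - 2 e₂ - 2 y e₁ + K y²`: eliminate `e₂` with `hx`, then `e₁ = K y`.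
  linear_combination (-(k ! * p.leadingCoeff)) * hsq - 2 * hx + k ! * p.leadingCoeff *
    (p.roots.sum + (k + 2) * y - 2 * y - 2 * (k + 1) * x) * hsum

end CharZero

lemma Splits.abs_root_sub_le {F : Type*} [Field F] [LinearOrder F] [IsStrictOrderedRing F]
    {p : F[X]} {k : ℕ} {x y ξ : F} (hp : p.Splits) (hk : p.natDegree = k + 2)
    (hy : (derivative^[k + 1] p).eval y = 0) (hx : (derivative^[k] p).eval x = 0)
    (hξ : p.eval ξ = 0) : |ξ - y| ≤ (k + 1) * |y - x| := by
  have hroots := splits_iff_card_roots.1 hp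
  have hp0 : p ≠ 0 := by rintro rfl; simp at hk
  have ht : (p.roots.map (· - y)).sum = 0 := by
    rw [Multiset.sum_map_sub, Multiset.map_id', Multiset.map_const', Multiset.sum_replicate,
      nsmul_eq_mul, hroots, hk, hp.sum_roots_eq_of_eval_iterate_derivative_eq_zero hk hy]
    push_cast
    ring
  have hmem : ξ - y ∈ p.roots.map (· - y) := Multiset.mem_map_of_mem _ ((mem_roots hp0).2 hξ)
  have key := Multiset.card_mul_sq_le_of_sum_eq_zero ht hmem
  rw [Multiset.card_map, hroots, hk, Multiset.map_map, Function.comp_def,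
    hp.sum_sq_roots_sub_eq hk hy hx] at key
  have hsq : (ξ - y) ^ 2 ≤ ((k + 1) * (y - x)) ^ 2 := by
    refine le_of_mul_le_mul_left ?_ (by positivity : (0 : F) < k + 2)
    push_cast at key
    linear_combination key
  rwa [sq_le_sq, abs_mul, abs_of_pos (by positivity : (0 : F) < k + 1)] at hsq

end Polynomial

theorem stmt_11 (n m : ℕ) (hn : 2 ≤ n) (hm : m ≤ n - 2) (f : ℝ[X]) (hdeg : f.natDegree = n)
    (hreal : f.roots.card = n)
    (xn1 : ℝ) (hxn1 : (derivative^[n - 1] f).eval xn1 = 0)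
    (xn2 : ℝ) (hxn2 : (derivative^[n - 2] f).eval xn2 = 0)
    (ξ : ℝ) (hξ : (derivative^[m] f).eval ξ = 0) :
    |ξ - xn1| ≤ ((n : ℝ) - m - 1) * |xn1 - xn2| := by
  obtain ⟨k, rfl⟩ : ∃ k, n = m + k + 2 := ⟨n - m - 2, by omega⟩
  have hf : f.Splits := splits_iff_card_roots.2 (hreal.trans hdeg.symm)
  have hg : (derivative^[m] f).natDegree = k + 2 := by
    rw [natDegree_iterate_derivative_eq, hdeg]; omega
  rw [show m + k + 2 - 1 = k + 1 + m by omega, Function.iterate_add_apply] at hxn1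
  rw [show m + k + 2 - 2 = k + m by omega, Function.iterate_add_apply] at hxn2
  refine ((hf.iterate_derivative_of_real m).abs_root_sub_le hg hxn1 hxn2 hξ).trans_eq ?_
  push_cast
  ring
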